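/- The subterm t of a paradox is preserved through its entire resolution cycle: if is_paradox t and t reduces in k ≤ 3 steps to u, then t is a subterm of u. -/

import Mathlib

inductive MirrorSystem : Type where
  | base     : MirrorSystem
  | node     : MirrorSystem → MirrorSystem
  | self_ref : MirrorSystem
  | cap      : MirrorSystem → MirrorSystem
  | enter    : MirrorSystem → MirrorSystem
  | named    : String → MirrorSystem → MirrorSystem

open MirrorSystem

def is_paradox (t : MirrorSystem) : Prop := ∃ s, t = named s self_ref

inductive Step : MirrorSystem → MirrorSystem → Prop where
  | paradox {t} : is_paradox t → Step t (cap t)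
  | integrate {t} : Step (cap t) (enter t)
  | reentry {t} : ¬ is_paradox t → Step (enter t) (node t)
  | node_rule {t} : Step (node t) (node (node t))
  | named_rule {s t t'} : Step t t' → Step (named s t) (named s t')

inductive Subterm : MirrorSystem → MirrorSystem → Prop where
  | refl (t) : Subterm t t
  | node {u t} : Subterm u t → Subterm u (node t)
  | cap {u t} : Subterm u t → Subterm u (cap t)
  | enter {u t} : Subterm u t → Subterm u (enter t)
  | named {u t} (s) : Subterm u t → Subterm u (named s t)

def StepN : ℕ → MirrorSystem → MirrorSystem → Prop
  | 0, a, b => a = b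
  | n + 1, a, c => ∃ b, Step a b ∧ StepN n b c

/-! A paradox `t` reduces only to `cap t`, which reduces only to `enter t`, and `enter t` is
stuck because (Reentry) is blocked for paradoxes. So the reducts of `t`, in any number of
steps, are `t`, `cap t` and `enter t`, each of which contains `t`. -/

theorem StepN.mem_of_step_closed {S : Set MirrorSystem} (hS : ∀ a ∈ S, ∀ b, Step a b → b ∈ S) :
    ∀ {k : ℕ} {a b : MirrorSystem}, a ∈ S → StepN k a b → b ∈ S
  | 0, _, _, ha, rfl => ha
  | _ + 1, _, _, ha, ⟨_, hab, hbc⟩ => mem_of_step_closed hS (hS _ ha _ hab) hbc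

theorem not_step_self_ref (u : MirrorSystem) : ¬ Step self_ref u := by
  rintro ⟨_, ⟨⟩⟩

theorem not_is_paradox_cap (t : MirrorSystem) : ¬ is_paradox (cap t) := by
  rintro ⟨_, ⟨⟩⟩

theorem not_is_paradox_enter (t : MirrorSystem) : ¬ is_paradox (enter t) := by
  rintro ⟨_, ⟨⟩⟩

theorem Step.eq_cap_of_is_paradox {t u : MirrorSystem} (hp : is_paradox t) (h : Step t u) :
    u = cap t := by
  obtain ⟨s, rfl⟩ := hp
  cases h with
  | paradox _ => rfl
  | named_rule h => exact absurd h (not_step_self_ref _)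

theorem Step.eq_enter_of_cap {t u : MirrorSystem} (h : Step (cap t) u) : u = enter t := by
  cases h with
  | paradox hp => exact absurd hp (not_is_paradox_cap t)
  | integrate => rfl

theorem not_step_enter_of_is_paradox {t u : MirrorSystem} (hp : is_paradox t) :
    ¬ Step (enter t) u := by
  rintro (hp' | _ | hnp)
  · exact not_is_paradox_enter t hp'
  · exact hnp hp

theorem StepN.mem_resolution_of_is_paradox {t u : MirrorSystem} {k : ℕ} (hp : is_paradox t)
    (h : StepN k t u) : u ∈ ({t, cap t, enter t} : Set MirrorSystem) := by
  refine StepN.mem_of_step_closed (fun a ha b hab ↦ ?_) (Set.mem_insert t _) h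
  rcases ha with rfl | rfl | rfl
  · exact .inr (.inl (hab.eq_cap_of_is_paradox hp))
  · exact .inr (.inr hab.eq_enter_of_cap)
  · exact absurd hab (not_step_enter_of_is_paradox hp)

theorem paradox_subterm_preserved_general {t u : MirrorSystem} {k : ℕ}
    (hp : is_paradox t) (h : StepN k t u) : Subterm t u := by
  rcases StepN.mem_resolution_of_is_paradox hp h with rfl | rfl | rfl
  · exact .refl u
  · exact .cap (.refl t)
  · exact .enter (.refl t)

theorem paradox_subterm_preserved {t u : MirrorSystem} {k : ℕ}
    (hp : is_paradox t) (hk : k ≤ 3) (h : StepN k t u) : Subterm t u :=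
  paradox_subterm_preserved_general hp h
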